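/- Lower bound for undiscounted FTRL: with the same 2D loss and comparator sequences as in the non-momentum lower bound (T a multiple of 4), the clipped scale-free FTRL learner Δ_t[i] = -clip_1(α (∑_{s=1}^t v_s[i])/√(∑_{s=1}^t v_s[i]^2)) satisfies -1 ≤ Δ_t[i] ≤ 0 for all t and i ∈ {1,2}, hence ∑_{t=1}^T ⟨v_t, Δ_{t-1}⟩ ≥ -T/2 and its dynamic regret is at least T/2. -/

import Mathlib

noncomputable def clip (D x : ℝ) : ℝ := x * min (D / |x|) 1

noncomputable def dot2 (p q : Fin 2 → ℝ) : ℝ := p 0 * q 0 + p 1 * q 1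

/-!
In each coordinate the losses are `+1` on every other round of the first half and are mirrored to
`-1` in the second half, so every partial sum is nonnegative and each scale-free FTRL iterate
`-clip 1 (α S / √Q)` lies in `[-1, 0]`. Any learner playing in `[-1, 0]²` pays at least `-1` per
round in the first half and at least `0` in the second, whereas the comparator earns exactly `-1`
in every round.
-/

open Finset

theorem clip_mem_Icc {D x : ℝ} (hD : 0 ≤ D) (hx : 0 ≤ x) : clip D x ∈ Set.Icc 0 D := by
  rcases hx.eq_or_lt with rfl | hx
  · simp [clip, hD]
  · refine ⟨by unfold clip; positivity, ?_⟩
    calc clip D x ≤ x * (D / x) := by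
          rw [clip, abs_of_pos hx]; exact mul_le_mul_of_nonneg_left (min_le_left _ _) hx.le
      _ = D := by field_simp

theorem ite_neg_clip_one_mem_Icc {α S Q : ℝ} (hα : 0 ≤ α) (hS : 0 ≤ S) :
    (if Q = 0 then 0 else -clip 1 (α * S / √Q)) ∈ Set.Icc (-1) 0 := by
  split_ifs
  · simp
  · obtain ⟨h0, h1⟩ := clip_mem_Icc zero_le_one (by positivity : 0 ≤ α * S / √Q)
    constructor <;> linarith

theorem sum_Ioc_nonneg_of_antiperiodic {g : ℕ → ℝ} {m t : ℕ} (hg : ∀ s ∈ Ioc 0 m, 0 ≤ g s)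
    (hanti : ∀ s ∈ Ioc 0 m, g (m + s) = -g s) (ht : t ≤ 2 * m) : 0 ≤ ∑ s ∈ Ioc 0 t, g s := by
  rcases le_total t m with htm | hmt
  · exact sum_nonneg fun s hs => hg s (Ioc_subset_Ioc_right htm hs)
  obtain ⟨r, rfl⟩ := Nat.exists_eq_add_of_le hmt
  have hrm : r ≤ m := by omega
  have hshift : ∑ s ∈ Ioc m (m + r), g s = -∑ s ∈ Ioc 0 r, g s := by
    have hIoc : Ioc m (m + r) = (Ioc 0 r).map (addLeftEmbedding m) := by
      rw [map_add_left_Ioc, add_zero]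
    rw [hIoc, sum_map, ← sum_neg_distrib]
    exact sum_congr rfl fun s hs => hanti s (Ioc_subset_Ioc_right hrm hs)
  have htail : 0 ≤ ∑ s ∈ Ioc r m, g s :=
    sum_nonneg fun s hs => hg s (Ioc_subset_Ioc_left r.zero_le hs)
  rw [← sum_Ioc_consecutive g m.zero_le le_self_add, hshift,
    ← sum_Ioc_consecutive g r.zero_le hrm]
  linarith

def alternatingLoss (T t : ℕ) : Fin 2 → ℝ :=
  if t ≤ T / 2 then (if Even t then ![1, 0] else ![0, 1])
  else (if Even t then ![-1, 0] else ![0, -1])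

def switchingComparator (T t : ℕ) : Fin 2 → ℝ :=
  if t < T / 2 then ![-1, -1] else ![1, 1]

theorem dot2_sub_right (p q r : Fin 2 → ℝ) : dot2 p (q - r) = dot2 p q - dot2 p r := by
  simp only [dot2, Pi.sub_apply]; ring

section alternatingLoss

variable {T : ℕ}

theorem alternatingLoss_nonneg {t : ℕ} (ht : t ≤ T / 2) (i : Fin 2) :
    0 ≤ alternatingLoss T t i := by
  unfold alternatingLoss
  split_ifs <;> fin_cases i <;> simp

theorem alternatingLoss_half_add (hT : 4 ∣ T) {t : ℕ} (ht : t ∈ Ioc 0 (T / 2)) :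
    alternatingLoss T (T / 2 + t) = -alternatingLoss T t := by
  rw [mem_Ioc] at ht
  have hle : ¬ T / 2 + t ≤ T / 2 := by omega
  have hhalf : Even (T / 2) := by
    obtain ⟨k, rfl⟩ := hT
    exact ⟨k, by omega⟩
  have hpar : Even (T / 2 + t) ↔ Even t := by simp [Nat.even_add, hhalf]
  ext i
  by_cases he : Even t <;> fin_cases i <;> simp [alternatingLoss, hle, ht.2, hpar, he]

theorem sum_alternatingLoss_nonneg (hT : 4 ∣ T) {t : ℕ} (ht : t ≤ T) (i : Fin 2) :
    0 ≤ ∑ s ∈ Icc 1 t, alternatingLoss T s i := by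
  rw [show Icc 1 t = Ioc 0 t from Icc_add_one_left_eq_Ioc 0 t]
  refine sum_Ioc_nonneg_of_antiperiodic (m := T / 2)
    (fun s hs => alternatingLoss_nonneg (mem_Ioc.1 hs).2 i)
    (fun s hs => by rw [alternatingLoss_half_add hT hs, Pi.neg_apply]) (by omega)

theorem ite_le_dot2_alternatingLoss {q : Fin 2 → ℝ} (hq : ∀ i, q i ∈ Set.Icc (-1) 0) (t : ℕ) :
    (if t ≤ T / 2 then -1 else 0) ≤ dot2 (alternatingLoss T t) q := by
  have h0 := hq 0; have h1 := hq 1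
  simp only [Set.mem_Icc] at h0 h1
  unfold alternatingLoss
  split_ifs <;> simp [dot2] <;> linarith

theorem dot2_alternatingLoss_switchingComparator {t : ℕ} (ht : 0 < t) :
    dot2 (alternatingLoss T t) (switchingComparator T (t - 1)) = -1 := by
  unfold alternatingLoss switchingComparator
  split_ifs <;> first | omega | simp [dot2]

end alternatingLoss

theorem neg_half_le_sum_dot2_alternatingLoss {T : ℕ} (hT : 2 ∣ T) {Δ : ℕ → Fin 2 → ℝ}
    (hΔ : ∀ t < T, ∀ i, Δ t i ∈ Set.Icc (-1) 0) :
    -(T : ℝ) / 2 ≤ ∑ t ∈ Icc 1 T, dot2 (alternatingLoss T t) (Δ (t - 1)) :=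
  calc -(T : ℝ) / 2 = ∑ t ∈ Icc 1 T, if t ≤ T / 2 then (-1 : ℝ) else 0 := by
        rw [← sum_filter, show (Icc 1 T).filter (· ≤ T / 2) = Icc 1 (T / 2) by ext; simp; omega]
        simp [Nat.cast_div_charZero hT, neg_div]
    _ ≤ ∑ t ∈ Icc 1 T, dot2 (alternatingLoss T t) (Δ (t - 1)) :=
        sum_le_sum fun t ht => ite_le_dot2_alternatingLoss
          (fun i => hΔ (t - 1) (by rw [mem_Icc] at ht; omega) i) t

theorem sum_dot2_alternatingLoss_switchingComparator (T : ℕ) :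
    ∑ t ∈ Icc 1 T, dot2 (alternatingLoss T t) (switchingComparator T (t - 1)) = -T := by
  rw [sum_congr rfl fun t ht => dot2_alternatingLoss_switchingComparator (mem_Icc.1 ht).1]
  simp

theorem stmt_17_general (T : ℕ) (hT4 : 4 ∣ T) (α : ℝ) (hα : 0 < α)
    (v u : ℕ → Fin 2 → ℝ)
    (hv : ∀ t, v t = if t ≤ T / 2 then (if Even t then ![1, 0] else ![0, 1])
                     else (if Even t then ![-1, 0] else ![0, -1]))
    (hu : ∀ t, u t = if t < T / 2 then ![-1, -1] else ![1, 1])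
    (Δ : ℕ → Fin 2 → ℝ) (hΔ0 : ∀ i, Δ 0 i = 0)
    (hΔ : ∀ t, 1 ≤ t → ∀ i, Δ t i =
      if (∑ s ∈ Finset.Icc 1 t, (v s i) ^ 2) = 0 then 0
      else -clip 1 (α * (∑ s ∈ Finset.Icc 1 t, v s i)
        / Real.sqrt (∑ s ∈ Finset.Icc 1 t, (v s i) ^ 2))) :
    (∀ t ≤ T, ∀ i, -1 ≤ Δ t i ∧ Δ t i ≤ 0)
    ∧ (∑ t ∈ Finset.Icc 1 T, dot2 (v t) (Δ (t - 1)) ≥ -(T : ℝ) / 2)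
    ∧ (∑ t ∈ Finset.Icc 1 T, dot2 (v t) (Δ (t - 1) - u (t - 1)) ≥ (T : ℝ) / 2) := by
  obtain rfl : v = alternatingLoss T := funext hv
  obtain rfl : u = switchingComparator T := funext hu
  have hbound : ∀ t ≤ T, ∀ i, Δ t i ∈ Set.Icc (-1) 0 := by
    intro t ht i
    rcases Nat.eq_zero_or_pos t with rfl | ht0
    · simp [hΔ0]
    · rw [hΔ t ht0 i]
      exact ite_neg_clip_one_mem_Icc hα.le (sum_alternatingLoss_nonneg hT4 ht i)
  have hlearner := neg_half_le_sum_dot2_alternatingLoss (dvd_trans ⟨2, rfl⟩ hT4)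
    fun t ht => hbound t ht.le
  refine ⟨hbound, hlearner, ?_⟩
  simp only [dot2_sub_right, sum_sub_distrib, sum_dot2_alternatingLoss_switchingComparator]
  linarith

theorem stmt_17 (T : ℕ) (hT4 : 4 ∣ T) (hT : 0 < T) (α : ℝ) (hα : 0 < α)
    (v u : ℕ → Fin 2 → ℝ)
    (hv : ∀ t, v t = if t ≤ T / 2 then (if Even t then ![1, 0] else ![0, 1])
                     else (if Even t then ![-1, 0] else ![0, -1]))
    (hu : ∀ t, u t = if t < T / 2 then ![-1, -1] else ![1, 1])
    (Δ : ℕ → Fin 2 → ℝ) (hΔ0 : ∀ i, Δ 0 i = 0)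
    (hΔ : ∀ t, 1 ≤ t → ∀ i, Δ t i =
      if (∑ s ∈ Finset.Icc 1 t, (v s i) ^ 2) = 0 then 0
      else -clip 1 (α * (∑ s ∈ Finset.Icc 1 t, v s i)
        / Real.sqrt (∑ s ∈ Finset.Icc 1 t, (v s i) ^ 2))) :
    (∀ t ≤ T, ∀ i, -1 ≤ Δ t i ∧ Δ t i ≤ 0)
    ∧ (∑ t ∈ Finset.Icc 1 T, dot2 (v t) (Δ (t - 1)) ≥ -(T : ℝ) / 2)
    ∧ (∑ t ∈ Finset.Icc 1 T, dot2 (v t) (Δ (t - 1) - u (t - 1)) ≥ (T : ℝ) / 2) :=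
  stmt_17_general T hT4 α hα v u hv hu Δ hΔ0 hΔ
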